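/- If (f₁,...,fₘ) is a mutually interlacing sequence of real polynomials with positive leading coefficients, then for any 1 ≤ i < j ≤ m, the sum fᵢ + fᵢ₊₁ + ⋯ + fⱼ has only real zeros, and moreover fᵢ ⪯ (fᵢ + ⋯ + fⱼ) ⪯ fⱼ. -/

import Mathlib

open Polynomial

/-- `f` has only real zeros (every complex zero is real). -/
def RealRooted (f : Polynomial ℝ) : Prop :=
  ∀ z : ℂ, z ∈ (f.map (algebraMap ℝ ℂ)).roots → z.im = 0

/-- all zeros of `f` are real (counted with multiplicity). -/
def AllRealRoots (f : Polynomial ℝ) : Prop :=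
  f.roots.card = f.natDegree

/-- two polynomials are compatible if every nonnegative linear combination
has only real zeros. -/
def Compatible (f g : Polynomial ℝ) : Prop :=
  ∀ c d : ℝ, 0 ≤ c → 0 ≤ d → RealRooted (C c * f + C d * g)

/-- `Interlaces g f` means `g ⪯ f`: both are real-rooted with positive leading
coefficients, and listing the zeros in decreasing order `u` (of `f`) and `v`
(of `g`), either `deg f = deg g` and `vₙ ≤ uₙ ≤ ⋯ ≤ v₁ ≤ u₁`, or
`deg f = deg g + 1` and `uₙ ≤ vₙ₋₁ ≤ ⋯ ≤ v₁ ≤ u₁`. -/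
def Interlaces (g f : Polynomial ℝ) : Prop :=
  0 < f.leadingCoeff ∧ 0 < g.leadingCoeff ∧
  ∃ u v : List ℝ,
    u.Pairwise (· ≥ ·) ∧ v.Pairwise (· ≥ ·) ∧
    f.roots = (u : Multiset ℝ) ∧ g.roots = (v : Multiset ℝ) ∧
    u.length = f.natDegree ∧ v.length = g.natDegree ∧
    (u.length = v.length ∨ u.length = v.length + 1) ∧
    (∀ (i : ℕ) (hv : i < v.length) (hu : i < u.length),
      v.get ⟨i, hv⟩ ≤ u.get ⟨i, hu⟩) ∧
    (∀ (i : ℕ) (hu : i + 1 < u.length) (hv : i < v.length),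
      u.get ⟨i + 1, hu⟩ ≤ v.get ⟨i, hv⟩)

/-!
Write `N h x` (`rootCountGE h x`) for the number of zeros of `h` in `[x, ∞)`. For real-rooted
`g, f` with positive leading coefficients, `g ⪯ f` says exactly that `N g ≤ N f ≤ N g + 1`
pointwise, and in this form the relation can be chained along the sequence.

The core is `g ⪯ f → g ⪯ g + f ⪯ f`. Common zeros split off as a common factor, so assume there
are none, and let `u₀ ≥ u₁ ≥ ⋯` and `v₀ ≥ v₁ ≥ ⋯` be the zeros of `f` and `g`. A polynomial with
positive leading coefficient has the sign `(-1) ^ N h x` away from its zeros. At `uₚ` the sum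
`g + f` takes the value of `g`, of sign `(-1) ^ p`, and at `vₚ` that of `f`, of sign
`(-1) ^ (p + 1)`. Since `N (g + f)` is antitone and bounded by `deg f`, these parities force
`N (g + f) uₚ = p` and `N (g + f) vₚ > p`, which gives `N g ≤ N (g + f) ≤ N f`, and also enough real
zeros of `g + f` to make it real-rooted.
-/

namespace List

variable {α : Type*} [LinearOrder α]

theorem le_getElem_iff_lt_countP {l : List α} (hl : l.Pairwise (· ≥ ·)) {x : α} {p : ℕ}
    (hp : p < l.length) : x ≤ l[p] ↔ p < l.countP (x ≤ ·) := by
  induction l generalizing p with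
  | nil => simp at hp
  | cons a t ih =>
    rw [pairwise_cons] at hl
    by_cases hxa : x ≤ a
    · cases p with
      | zero => simp [hxa]
      | succ q => simpa [countP_cons, hxa] using ih hl.2 (by simpa using hp)
    · have ht : t.countP (x ≤ ·) = 0 :=
        countP_eq_zero.2 fun b hb hxb => hxa (le_trans (by simpa using hxb) (hl.1 b hb))
      have hlt : ¬ x ≤ (a :: t)[p] := by
        cases p with
        | zero => simpa using hxa
        | succ q => exact fun h => hxa (h.trans (hl.1 _ (getElem_mem _)))
      simp [hxa, ht, hlt]

theorem getElem_add_le_of_countP_le {u v : List α} (hu : u.Pairwise (· ≥ ·))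
    (hv : v.Pairwise (· ≥ ·)) {k : ℕ} (h : ∀ x, u.countP (x ≤ ·) ≤ v.countP (x ≤ ·) + k)
    {p : ℕ} (hpu : p + k < u.length) (hpv : p < v.length) : u[p + k] ≤ v[p] := by
  have := (le_getElem_iff_lt_countP hu hpu).1 le_rfl
  have := h u[p + k]
  exact (le_getElem_iff_lt_countP hv hpv).2 (by omega)

theorem countP_le_of_getElem_add_le {u v : List α} {k : ℕ} (hlen : u.length ≤ v.length + k)
    (h : ∀ p (hpu : p + k < u.length) (hpv : p < v.length), u[p + k] ≤ v[p]) (x : α) :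
    u.countP (x ≤ ·) ≤ v.countP (x ≤ ·) + k := by
  induction u generalizing v k with
  | nil => simp
  | cons a t ih =>
    cases k with
    | zero =>
      cases v with
      | nil => simp at hlen
      | cons b s =>
        have hab : a ≤ b := h 0 (by simp) (by simp)
        have := ih (v := s) (k := 0) (by simpa using hlen)
          (fun p hpu hpv => h (p + 1) (by simpa using hpu) (by simpa using hpv))
        by_cases hxa : x ≤ a
        · simp only [countP_cons, hxa, hxa.trans hab, decide_true]
          omega
        · simp only [countP_cons, hxa, decide_false, Bool.false_eq_true, if_false]
          omega
    | succ k =>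
      have := ih (v := v) (k := k) (by simp at hlen; omega)
        (fun p hpu hpv => h p (by simp; omega) hpv)
      simp only [countP_cons]
      split <;> omega

theorem countP_le_of_lt_apply_getElem {N : α → ℕ} (hN : Antitone N) {v : List α}
    (hv : v.Pairwise (· ≥ ·)) (h : ∀ p (hp : p < v.length), p < N v[p]) (x : α) :
    v.countP (x ≤ ·) ≤ N x := by
  obtain hk | hk := Nat.eq_zero_or_pos (v.countP (x ≤ ·))
  · omega
  · have hlt : v.countP (x ≤ ·) - 1 < v.length := by
      have := countP_le_length (p := fun y => decide (x ≤ y)) (l := v)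
      omega
    have := h _ hlt
    have := hN ((le_getElem_iff_lt_countP hv hlt (x := x)).2 (by omega))
    omega

theorem le_countP_of_apply_getElem_le {N : α → ℕ} (hN : Antitone N) {u : List α}
    (hu : u.Pairwise (· ≥ ·)) (hlen : ∀ x, N x ≤ u.length) (h : ∀ p (hp : p < u.length), N u[p] ≤ p)
    (x : α) : N x ≤ u.countP (x ≤ ·) := by
  obtain hk | hk := (countP_le_length (p := fun y => decide (x ≤ y)) (l := u)).eq_or_lt
  · exact hk ▸ hlen x
  · have hx : u[u.countP (x ≤ ·)] < x :=
      not_le.1 fun hx => ((le_getElem_iff_lt_countP hu hk).1 hx).false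
    exact (hN hx.le).trans (h _ hk)

theorem countP_getElem_le_left {u v : List α} (hu : u.Pairwise (· ≥ ·)) (hv : v.Pairwise (· ≥ ·))
    (hdisj : ∀ a ∈ u, a ∉ v) (h₁ : ∀ x, v.countP (x ≤ ·) ≤ u.countP (x ≤ ·))
    (h₂ : ∀ x, u.countP (x ≤ ·) ≤ v.countP (x ≤ ·) + 1) {p : ℕ} (hp : p < u.length) :
    v.countP (u[p] ≤ ·) = p := by
  have := (le_getElem_iff_lt_countP hu hp).1 le_rfl
  have := h₂ u[p]
  refine le_antisymm (not_lt.1 fun hlt => ?_) (by omega)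
  have hpv : p < v.length := hlt.trans_le countP_le_length
  have hle : u[p] ≤ v[p] := (le_getElem_iff_lt_countP hv hpv).2 hlt
  exact hdisj _ (getElem_mem hp)
    (le_antisymm hle (getElem_add_le_of_countP_le hv hu (k := 0) h₁ hpv hp) ▸ getElem_mem hpv)

theorem countP_getElem_le_right {u v : List α} (hu : u.Pairwise (· ≥ ·)) (hv : v.Pairwise (· ≥ ·))
    (hdisj : ∀ a ∈ u, a ∉ v) (h₁ : ∀ x, v.countP (x ≤ ·) ≤ u.countP (x ≤ ·))
    (h₂ : ∀ x, u.countP (x ≤ ·) ≤ v.countP (x ≤ ·) + 1) {p : ℕ} (hp : p < v.length) :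
    u.countP (v[p] ≤ ·) = p + 1 := by
  have := (le_getElem_iff_lt_countP hv hp).1 le_rfl
  have := h₁ v[p]
  refine le_antisymm (not_lt.1 fun hlt => ?_) (by omega)
  have hpu : p + 1 < u.length := hlt.trans_le countP_le_length
  have hle : v[p] ≤ u[p + 1] := (le_getElem_iff_lt_countP hu hpu).2 hlt
  exact hdisj _ (getElem_mem hpu)
    (le_antisymm (getElem_add_le_of_countP_le hu hv h₂ hpu hp) hle ▸ getElem_mem hp)

end List

theorem Nat.apply_eq_self_of_mod_two_eq {n : ℕ} {a : ℕ → ℕ}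
    (hmono : ∀ p, p + 1 < n → a p ≤ a (p + 1)) (hpar : ∀ p < n, a p % 2 = p % 2)
    (hlast : a (n - 1) ≤ n) {p : ℕ} (hp : p < n) : a p = p := by
  have hstep : ∀ q, q + 1 < n → a q + 1 ≤ a (q + 1) := fun q hq => by
    have := hmono q hq
    have := hpar q (by omega)
    have := hpar (q + 1) hq
    omega
  have hgap : ∀ q r, q ≤ r → r < n → a q + (r - q) ≤ a r := by
    intro q r hqr
    induction r, hqr using Nat.le_induction with
    | base => simp
    | succ r _ ih =>
      intro hr
      have := ih (by omega)
      have := hstep r hr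
      omega
  have := hgap 0 p p.zero_le hp
  have := hgap p (n - 1) (by omega) (by omega)
  have := hpar (n - 1) (by omega)
  omega

theorem List.countP_le_apply_le_countP_of_mod_two {α : Type*} [LinearOrder α] {N : α → ℕ}
    (hN : Antitone N) {u v : List α} (hu : u.Pairwise (· ≥ ·)) (hv : v.Pairwise (· ≥ ·))
    (hvu : ∀ p (hp : p < v.length), u.countP (v[p] ≤ ·) = p + 1)
    (hpar_u : ∀ p (hp : p < u.length), N u[p] % 2 = p % 2)
    (hpar_v : ∀ p (hp : p < v.length), N v[p] % 2 = (p + 1) % 2) (hlen : ∀ x, N x ≤ u.length)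
    (x : α) : v.countP (x ≤ ·) ≤ N x ∧ N x ≤ u.countP (x ≤ ·) := by
  have hN_u : ∀ p (hp : p < u.length), N u[p] = p := fun p hp => by
    have := Nat.apply_eq_self_of_mod_two_eq (a := fun q => N (u.getD q x)) ?_ ?_ ?_ hp
    · simpa only [getD_eq_getElem _ _ hp] using this
    · intro q hq
      simp only [getD_eq_getElem _ _ hq, getD_eq_getElem _ _ (q.lt_succ_self.trans hq)]
      exact hN (pairwise_iff_getElem.1 hu _ _ _ _ q.lt_succ_self)
    · intro q hq
      simpa only [getD_eq_getElem _ _ hq] using hpar_u q hq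
    · exact hlen _
  have hN_v : ∀ p (hp : p < v.length), p < N v[p] := fun p hp => by
    have hpu : p < u.length := by
      have := countP_le_length (p := fun y => decide (v[p] ≤ y)) (l := u)
      have := hvu p hp
      omega
    have := hN ((le_getElem_iff_lt_countP hu hpu).2 (by rw [hvu p hp]; omega))
    have := hN_u p hpu
    have := hpar_v p hp
    omega
  exact ⟨countP_le_of_lt_apply_getElem hN hv hN_v x,
    le_countP_of_apply_getElem_le hN hu hlen (fun p hp => (hN_u p hp).le) x⟩

theorem Multiset.pos_neg_one_pow_countP_mul_prod_sub {x : ℝ} {s : Multiset ℝ} (hx : x ∉ s) :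
    0 < (-1) ^ s.countP (x ≤ ·) * (s.map (x - ·)).prod := by
  induction s using Multiset.induction_on with
  | empty => simp
  | cons a s ih =>
    rw [mem_cons, not_or] at hx
    have hs := ih hx.2
    rw [countP_cons, map_cons, prod_cons, pow_add]
    split_ifs with hxa
    · have e : (-1 : ℝ) ^ s.countP (x ≤ ·) * (-1) ^ 1 * ((x - a) * (s.map (x - ·)).prod) =
          (a - x) * ((-1) ^ s.countP (x ≤ ·) * (s.map (x - ·)).prod) := by ring
      rw [e]
      exact mul_pos (by linarith [lt_of_le_of_ne hxa hx.1]) hs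
    · have e : (-1 : ℝ) ^ s.countP (x ≤ ·) * (-1) ^ 0 * ((x - a) * (s.map (x - ·)).prod) =
          (x - a) * ((-1) ^ s.countP (x ≤ ·) * (s.map (x - ·)).prod) := by ring
      rw [e]
      exact mul_pos (by linarith [not_le.1 hxa]) hs

namespace Polynomial

theorem leadingCoeff_add_pos {p q : ℝ[X]} (hp : 0 < p.leadingCoeff) (hq : 0 < q.leadingCoeff) :
    0 < (p + q).leadingCoeff := by
  rcases lt_trichotomy p.degree q.degree with h | h | h
  · rwa [leadingCoeff_add_of_degree_lt h]
  · rw [leadingCoeff_add_of_degree_eq h (by positivity)]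
    positivity
  · rwa [leadingCoeff_add_of_degree_lt' h]

theorem eval_pos_of_roots_eq_zero {q : ℝ[X]} (hq : 0 < q.leadingCoeff) (hroots : q.roots = 0)
    (x : ℝ) : 0 < q.eval x := by
  obtain hdeg | hdeg := Nat.eq_zero_or_pos q.natDegree
  · rw [eq_C_of_natDegree_eq_zero hdeg, eval_C]
    rwa [leadingCoeff, hdeg] at hq
  by_contra! hx
  obtain ⟨y, hy, hxy⟩ := (((tendsto_atTop_of_leadingCoeff_nonneg q
    (natDegree_pos_iff_degree_pos.1 hdeg) hq.le).eventually (Filter.eventually_gt_atTop 0)).and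
    (Filter.eventually_ge_atTop x)).exists
  obtain ⟨z, -, hz⟩ := intermediate_value_Icc hxy q.continuous.continuousOn ⟨hx, hy.le⟩
  simpa [hroots] using (mem_roots (leadingCoeff_ne_zero.1 hq.ne')).2 hz

theorem allRealRoots_of_natDegree_le_card_roots_add_one {h : ℝ[X]}
    (hh : h.natDegree ≤ h.roots.card + 1) : AllRealRoots h := by
  obtain ⟨q, -, hdeg, hroots⟩ := exists_prod_multiset_X_sub_C_mul h
  have hq : q.natDegree = 0 := by
    by_contra hne
    have hq0 : q ≠ 0 := by rintro rfl; simp at hne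
    have hq1 : q.natDegree = 1 := by omega
    obtain ⟨z, hz⟩ := exists_root_of_degree_eq_one (by rw [degree_eq_natDegree hq0, hq1]; rfl)
    simpa [hroots] using (mem_roots hq0).2 hz
  unfold AllRealRoots
  omega

theorem realRooted_of_allRealRoots {f : ℝ[X]} (hf : AllRealRoots f) : RealRooted f := by
  intro z hz
  rw [← roots_map_of_injective_of_card_eq_natDegree (algebraMap ℝ ℂ).injective hf] at hz
  obtain ⟨a, -, rfl⟩ := Multiset.mem_map.1 hz
  exact Complex.ofReal_im a

theorem allRealRoots_mul_iff {P f : ℝ[X]} (hP : AllRealRoots P) (hPf : P * f ≠ 0) :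
    AllRealRoots (P * f) ↔ AllRealRoots f := by
  obtain ⟨hP0, hf0⟩ := mul_ne_zero_iff.1 hPf
  unfold AllRealRoots at *
  rw [roots_mul hPf, natDegree_mul hP0 hf0, Multiset.card_add, hP]
  omega

theorem exists_eq_mul_of_disjoint_roots {g f : ℝ[X]} (hg : g ≠ 0) (hf : f ≠ 0) :
    ∃ P g₁ f₁ : ℝ[X], P.Monic ∧ AllRealRoots P ∧ g = P * g₁ ∧ f = P * f₁ ∧
      ∀ x, f₁.IsRoot x → ¬ g₁.IsRoot x := by
  classical
  set c := g.roots ∩ f.roots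
  obtain ⟨g₁, hg₁⟩ := (Multiset.prod_X_sub_C_dvd_iff_le_roots hg c).2 Multiset.inter_le_left
  obtain ⟨f₁, hf₁⟩ := (Multiset.prod_X_sub_C_dvd_iff_le_roots hf c).2 Multiset.inter_le_right
  refine ⟨_, g₁, f₁, monic_multisetProd_X_sub_C c, ?_, hg₁, hf₁, fun x hf₁x hg₁x => ?_⟩
  · rw [AllRealRoots, roots_multiset_prod_X_sub_C, natDegree_multiset_prod_X_sub_C_eq_card]
  · have hcount : ∀ {p q : ℝ[X]}, p ≠ 0 → p = (c.map (X - C ·)).prod * q → q.IsRoot x →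
        c.count x < p.roots.count x := by
      intro p q hp hpq hq
      rw [hpq] at hp ⊢
      rw [roots_mul hp, roots_multiset_prod_X_sub_C, Multiset.count_add, Nat.lt_add_right_iff_pos,
        Multiset.count_pos, mem_roots (right_ne_zero_of_mul hp)]
      exact hq
    have := hcount hg hg₁ hg₁x
    have := hcount hf hf₁ hf₁x
    rw [Multiset.count_inter] at *
    omega

end Polynomial

noncomputable def rootCountGE (f : ℝ[X]) (x : ℝ) : ℕ := f.roots.countP (x ≤ ·)

theorem rootCountGE_antitone (f : ℝ[X]) : Antitone (rootCountGE f) := fun x y hxy => by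
  simp only [rootCountGE, Multiset.countP_eq_card_filter]
  exact Multiset.card_le_card (Multiset.monotone_filter_right _ fun r hr => hxy.trans hr)

theorem rootCountGE_le_card_roots (f : ℝ[X]) (x : ℝ) : rootCountGE f x ≤ f.roots.card :=
  Multiset.countP_le_card _ _

theorem rootCountGE_mul {f g : ℝ[X]} (hfg : f * g ≠ 0) :
    rootCountGE (f * g) = rootCountGE f + rootCountGE g := by
  ext x
  simp [rootCountGE, roots_mul hfg, Multiset.countP_add]

theorem rootCountGE_eq_countP_sort (f : ℝ[X]) (x : ℝ) :
    rootCountGE f x = (f.roots.sort (· ≥ ·)).countP (x ≤ ·) := by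
  rw [rootCountGE, ← Multiset.coe_countP, Multiset.sort_eq]

theorem natDegree_le_of_rootCountGE_le {g f : ℝ[X]} (hg : AllRealRoots g) (hf : AllRealRoots f)
    {k : ℕ} (h : rootCountGE g ≤ rootCountGE f + k) : g.natDegree ≤ f.natDegree + k := by
  obtain ⟨x, hx⟩ := (g.roots + f.roots).toFinset.bddBelow
  have hcount : ∀ p : ℝ[X], (∀ r ∈ p.roots, x ≤ r) → AllRealRoots p →
      rootCountGE p x = p.natDegree :=
    fun p hp hr => (Multiset.countP_eq_card.2 hp).trans hr
  have := h x
  rwa [Pi.add_apply, Pi.natCast_apply, hcount g (fun r hr => hx (by simp [hr])) hg,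
    hcount f (fun r hr => hx (by simp [hr])) hf] at this

-- `h` is the product of its real linear factors and a factor without real zeros, which is positive.
theorem pos_neg_one_pow_rootCountGE_mul_eval {h : ℝ[X]} (hlc : 0 < h.leadingCoeff) {x : ℝ}
    (hx : h.eval x ≠ 0) : 0 < (-1) ^ rootCountGE h x * h.eval x := by
  obtain ⟨q, hq, -, hroots⟩ := exists_prod_multiset_X_sub_C_mul h
  have hqlc : 0 < q.leadingCoeff := by
    rwa [← hq, leadingCoeff_monic_mul (monic_multisetProd_X_sub_C _)] at hlc
  have heval : h.eval x = (h.roots.map (x - ·)).prod * q.eval x := by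
    conv_lhs => rw [← hq]
    simp [eval_multiset_prod]
  rw [heval, ← mul_assoc]
  exact mul_pos (Multiset.pos_neg_one_pow_countP_mul_prod_sub fun hm => hx (isRoot_of_mem_roots hm))
    (eval_pos_of_roots_eq_zero hqlc hroots x)

theorem rootCountGE_mod_two_eq_of_eval_eq {g h : ℝ[X]} (hg : 0 < g.leadingCoeff)
    (hh : 0 < h.leadingCoeff) {x : ℝ} (hx : g.eval x ≠ 0) (heq : h.eval x = g.eval x) :
    rootCountGE h x % 2 = rootCountGE g x % 2 := by
  have hNg := pos_neg_one_pow_rootCountGE_mul_eval hg hx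
  have hNh := pos_neg_one_pow_rootCountGE_mul_eval hh (heq ▸ hx)
  rw [heq] at hNh
  rcases Nat.even_or_odd (rootCountGE g x) with hg' | hg' <;>
    rcases Nat.even_or_odd (rootCountGE h x) with hh' | hh' <;>
    simp only [hg'.neg_one_pow, hh'.neg_one_pow] at hNg hNh
  · rw [Nat.even_iff.1 hg', Nat.even_iff.1 hh']
  · linarith
  · linarith
  · rw [Nat.odd_iff.1 hg', Nat.odd_iff.1 hh']

structure CountInterlaces (g f : ℝ[X]) : Prop where
  leadingCoeff_pos_left : 0 < g.leadingCoeff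
  leadingCoeff_pos_right : 0 < f.leadingCoeff
  allRealRoots_left : AllRealRoots g
  allRealRoots_right : AllRealRoots f
  rootCountGE_le : rootCountGE g ≤ rootCountGE f
  rootCountGE_le_add_one : rootCountGE f ≤ rootCountGE g + 1

theorem countInterlaces_mul_left_iff {P g f : ℝ[X]} (hP : P.Monic) (hPr : AllRealRoots P)
    (hg : g ≠ 0) (hf : f ≠ 0) : CountInterlaces (P * g) (P * f) ↔ CountInterlaces g f := by
  have hPg : P * g ≠ 0 := mul_ne_zero hP.ne_zero hg
  have hPf : P * f ≠ 0 := mul_ne_zero hP.ne_zero hf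
  constructor
  · rintro ⟨h₁, h₂, h₃, h₄, h₅, h₆⟩
    rw [leadingCoeff_monic_mul hP] at h₁ h₂
    rw [allRealRoots_mul_iff hPr hPg] at h₃
    rw [allRealRoots_mul_iff hPr hPf] at h₄
    rw [rootCountGE_mul hPg, rootCountGE_mul hPf] at h₅ h₆
    rw [add_assoc] at h₆
    exact ⟨h₁, h₂, h₃, h₄, (add_le_add_iff_left _).1 h₅, (add_le_add_iff_left _).1 h₆⟩
  · rintro ⟨h₁, h₂, h₃, h₄, h₅, h₆⟩
    refine ⟨by rwa [leadingCoeff_monic_mul hP], by rwa [leadingCoeff_monic_mul hP],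
      (allRealRoots_mul_iff hPr hPg).2 h₃, (allRealRoots_mul_iff hPr hPf).2 h₄, ?_, ?_⟩
    all_goals rw [rootCountGE_mul hPg, rootCountGE_mul hPf]
    · gcongr
    · rw [add_assoc]
      gcongr

namespace CountInterlaces

variable {g f : ℝ[X]}

theorem countP_sort_le (h : CountInterlaces g f) (x : ℝ) :
    (g.roots.sort (· ≥ ·)).countP (x ≤ ·) ≤ (f.roots.sort (· ≥ ·)).countP (x ≤ ·) := by
  simpa only [rootCountGE_eq_countP_sort] using h.rootCountGE_le x

theorem countP_sort_le_add_one (h : CountInterlaces g f) (x : ℝ) :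
    (f.roots.sort (· ≥ ·)).countP (x ≤ ·) ≤ (g.roots.sort (· ≥ ·)).countP (x ≤ ·) + 1 := by
  simpa only [Pi.add_apply, Pi.one_apply, rootCountGE_eq_countP_sort] using
    h.rootCountGE_le_add_one x

theorem natDegree_le (h : CountInterlaces g f) : g.natDegree ≤ f.natDegree := by
  simpa using natDegree_le_of_rootCountGE_le h.allRealRoots_left h.allRealRoots_right (k := 0)
    (by simpa using h.rootCountGE_le)

theorem natDegree_le_add_one (h : CountInterlaces g f) : f.natDegree ≤ g.natDegree + 1 :=
  natDegree_le_of_rootCountGE_le h.allRealRoots_right h.allRealRoots_left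
    (by simpa using h.rootCountGE_le_add_one)

theorem of_rootCountGE_between (hgf : CountInterlaces g f) {h : ℝ[X]} (hh : AllRealRoots h)
    (hlc : 0 < h.leadingCoeff) (hgh : rootCountGE g ≤ rootCountGE h)
    (hhf : rootCountGE h ≤ rootCountGE f) : CountInterlaces g h ∧ CountInterlaces h f :=
  ⟨⟨hgf.leadingCoeff_pos_left, hlc, hgf.allRealRoots_left, hh, hgh,
      hhf.trans hgf.rootCountGE_le_add_one⟩,
    ⟨hlc, hgf.leadingCoeff_pos_right, hh, hgf.allRealRoots_right, hhf,
      hgf.rootCountGE_le_add_one.trans (by gcongr)⟩⟩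

theorem add_of_disjoint (h : CountInterlaces g f) (hdisj : ∀ x, f.IsRoot x → ¬ g.IsRoot x) :
    CountInterlaces g (g + f) ∧ CountInterlaces (g + f) f := by
  set u := f.roots.sort (· ≥ ·) with hu_def
  set v := g.roots.sort (· ≥ ·) with hv_def
  have hu : u.Pairwise (· ≥ ·) := Multiset.pairwise_sort _ _
  have hv : v.Pairwise (· ≥ ·) := Multiset.pairwise_sort _ _
  have hfu : ∀ a ∈ u, f.IsRoot a := fun a ha => isRoot_of_mem_roots ((Multiset.mem_sort _).1 ha)
  have hgv : ∀ a ∈ v, g.IsRoot a := fun a ha => isRoot_of_mem_roots ((Multiset.mem_sort _).1 ha)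
  have hdisj' : ∀ a ∈ u, a ∉ v := fun a ha hav => hdisj a (hfu a ha) (hgv a hav)
  have hcount_u : ∀ p (hp : p < u.length), v.countP (u[p] ≤ ·) = p := fun _ hp =>
    List.countP_getElem_le_left hu hv hdisj' h.countP_sort_le h.countP_sort_le_add_one hp
  have hcount_v : ∀ p (hp : p < v.length), u.countP (v[p] ≤ ·) = p + 1 := fun _ hp =>
    List.countP_getElem_le_right hu hv hdisj' h.countP_sort_le h.countP_sort_le_add_one hp
  have hlc : 0 < (g + f).leadingCoeff :=
    leadingCoeff_add_pos h.leadingCoeff_pos_left h.leadingCoeff_pos_right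
  have hdeg : (g + f).natDegree ≤ u.length := by
    rw [Multiset.length_sort, h.allRealRoots_right]
    exact (natDegree_add_le _ _).trans (max_le h.natDegree_le le_rfl)
  have hlen : ∀ x, rootCountGE (g + f) x ≤ u.length := fun x =>
    (rootCountGE_le_card_roots _ x).trans ((card_roots' _).trans hdeg)
  have hpar_u : ∀ p (hp : p < u.length), rootCountGE (g + f) u[p] % 2 = p % 2 := fun p hp => by
    have hf0 := hfu _ (List.getElem_mem hp)
    rw [rootCountGE_mod_two_eq_of_eval_eq h.leadingCoeff_pos_left hlc (hdisj _ hf0)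
      (by simp [hf0.eq_zero]), rootCountGE_eq_countP_sort, ← hv_def, hcount_u p hp]
  have hpar_v : ∀ p (hp : p < v.length), rootCountGE (g + f) v[p] % 2 = (p + 1) % 2 :=
    fun p hp => by
      have hg0 := hgv _ (List.getElem_mem hp)
      rw [rootCountGE_mod_two_eq_of_eval_eq h.leadingCoeff_pos_right hlc
        (fun hf0 => hdisj _ hf0 hg0) (by simp [hg0.eq_zero]), rootCountGE_eq_countP_sort,
        ← hu_def, hcount_v p hp]
  have hsandwich := List.countP_le_apply_le_countP_of_mod_two (rootCountGE_antitone (g + f)) hu hv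
    hcount_v hpar_u hpar_v hlen
  have hreal : AllRealRoots (g + f) := by
    refine allRealRoots_of_natDegree_le_card_roots_add_one (hdeg.trans ?_)
    rcases Nat.eq_zero_or_pos u.length with h0 | h0
    · omega
    · have := hcount_u _ (Nat.sub_lt h0 one_pos)
      have := (hsandwich u[u.length - 1]).1
      have := rootCountGE_le_card_roots (g + f) u[u.length - 1]
      omega
  refine h.of_rootCountGE_between hreal hlc (fun x => ?_) (fun x => ?_)
  · exact (rootCountGE_eq_countP_sort g x).trans_le (hsandwich x).1
  · exact (hsandwich x).2.trans_eq (rootCountGE_eq_countP_sort f x).symm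

theorem add (h : CountInterlaces g f) : CountInterlaces g (g + f) ∧ CountInterlaces (g + f) f := by
  have hg := leadingCoeff_ne_zero.1 h.leadingCoeff_pos_left.ne'
  have hf := leadingCoeff_ne_zero.1 h.leadingCoeff_pos_right.ne'
  obtain ⟨P, g₁, f₁, hP, hPr, rfl, rfl, hdisj⟩ := exists_eq_mul_of_disjoint_roots hg hf
  have hg₁ := right_ne_zero_of_mul hg
  have hf₁ := right_ne_zero_of_mul hf
  obtain ⟨h₁, h₂⟩ := ((countInterlaces_mul_left_iff hP hPr hg₁ hf₁).1 h).add_of_disjoint hdisj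
  have hs := leadingCoeff_ne_zero.1 h₁.leadingCoeff_pos_right.ne'
  rw [← mul_add, countInterlaces_mul_left_iff hP hPr hg₁ hs,
    countInterlaces_mul_left_iff hP hPr hs hf₁]
  exact ⟨h₁, h₂⟩

end CountInterlaces

theorem interlaces_iff_countInterlaces {g f : ℝ[X]} : Interlaces g f ↔ CountInterlaces g f := by
  constructor
  · rintro ⟨hf, hg, u, v, -, -, hfu, hgv, hu, hv, hlen, h₁, h₂⟩
    have hNf : ∀ x, rootCountGE f x = u.countP (x ≤ ·) := fun x => by
      rw [rootCountGE, hfu, Multiset.coe_countP]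
    have hNg : ∀ x, rootCountGE g x = v.countP (x ≤ ·) := fun x => by
      rw [rootCountGE, hgv, Multiset.coe_countP]
    refine ⟨hg, hf, ?_, ?_, fun x => ?_, fun x => ?_⟩
    · rw [AllRealRoots, hgv, Multiset.coe_card, hv]
    · rw [AllRealRoots, hfu, Multiset.coe_card, hu]
    · rw [hNg, hNf]
      exact List.countP_le_of_getElem_add_le (k := 0) (by omega)
        (fun p hpv hpu => by simpa using h₁ p hpv hpu) x
    · rw [Pi.add_apply, Pi.one_apply, hNf, hNg]
      exact List.countP_le_of_getElem_add_le (k := 1) (by omega)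
        (fun p hpu hpv => by simpa using h₂ p hpu hpv) x
  · intro h
    refine ⟨h.leadingCoeff_pos_right, h.leadingCoeff_pos_left, _, _, Multiset.pairwise_sort _ _,
      Multiset.pairwise_sort _ _, (Multiset.sort_eq _ _).symm, (Multiset.sort_eq _ _).symm,
      (Multiset.length_sort _).trans h.allRealRoots_right,
      (Multiset.length_sort _).trans h.allRealRoots_left, ?_, fun p hv hu => ?_, fun p hu hv => ?_⟩
    · have := h.natDegree_le
      have := h.natDegree_le_add_one
      rw [Multiset.length_sort, Multiset.length_sort, h.allRealRoots_right, h.allRealRoots_left]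
      omega
    · simpa using List.getElem_add_le_of_countP_le (Multiset.pairwise_sort _ _)
        (Multiset.pairwise_sort _ _) (k := 0) h.countP_sort_le hv hu
    · simpa using List.getElem_add_le_of_countP_le (Multiset.pairwise_sort _ _)
        (Multiset.pairwise_sort _ _) h.countP_sort_le_add_one hu hv

theorem countInterlaces_sum_Icc {f : ℕ → ℝ[X]} {i j : ℕ} (hij : i < j)
    (hmut : ∀ k l, i ≤ k → k < l → l ≤ j → CountInterlaces (f k) (f l)) :
    CountInterlaces (f i) (∑ k ∈ Finset.Icc i j, f k) ∧
      CountInterlaces (∑ k ∈ Finset.Icc i j, f k) (f j) := by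
  induction j, hij using Nat.le_induction with
  | base =>
    rw [Finset.sum_Icc_succ_top (by omega), Finset.Icc_self, Finset.sum_singleton]
    exact (hmut i (i + 1) le_rfl (by omega) le_rfl).add
  | succ j hij ih =>
    obtain ⟨hiS, hSj⟩ := ih fun k l hk hkl hl => hmut k l hk hkl (by omega)
    have hi := hmut i (j + 1) le_rfl (by omega) le_rfl
    have hS := (hi.of_rootCountGE_between hiS.allRealRoots_right hiS.leadingCoeff_pos_right
      hiS.rootCountGE_le
      (hSj.rootCountGE_le.trans (hmut j (j + 1) (by omega) (by omega) le_rfl).rootCountGE_le)).2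
    obtain ⟨hSS', hS'⟩ := hS.add
    rw [Finset.sum_Icc_succ_top (by omega)]
    exact hi.of_rootCountGE_between hS'.allRealRoots_left hS'.leadingCoeff_pos_left
      (hiS.rootCountGE_le.trans hSS'.rootCountGE_le) hS'.rootCountGE_le

theorem consecutive_sums_of_mutually_interlacing_general (m : ℕ)
    (f : ℕ → Polynomial ℝ)
    (hmut : ∀ i j, 1 ≤ i → i < j → j ≤ m → Interlaces (f i) (f j)) :
    ∀ i j, 1 ≤ i → i < j → j ≤ m →
      RealRooted (∑ k ∈ Finset.Icc i j, f k) ∧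
      Interlaces (f i) (∑ k ∈ Finset.Icc i j, f k) ∧
      Interlaces (∑ k ∈ Finset.Icc i j, f k) (f j) := by
  intro i j hi hij hjm
  obtain ⟨hiS, hSj⟩ := countInterlaces_sum_Icc hij fun k l hk hkl hl =>
    interlaces_iff_countInterlaces.1 (hmut k l (by omega) hkl (by omega))
  exact ⟨realRooted_of_allRealRoots hiS.allRealRoots_right,
    interlaces_iff_countInterlaces.2 hiS, interlaces_iff_countInterlaces.2 hSj⟩

/-- Fisk's corollary: consecutive sums of a mutually interlacing sequence are
real-rooted and are interlaced appropriately. -/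
theorem consecutive_sums_of_mutually_interlacing (m : ℕ)
    (f : ℕ → Polynomial ℝ)
    (hlead : ∀ k, 1 ≤ k → k ≤ m → 0 < (f k).leadingCoeff)
    (hmut : ∀ i j, 1 ≤ i → i < j → j ≤ m → Interlaces (f i) (f j)) :
    ∀ i j, 1 ≤ i → i < j → j ≤ m →
      RealRooted (∑ k ∈ Finset.Icc i j, f k) ∧
      Interlaces (f i) (∑ k ∈ Finset.Icc i j, f k) ∧
      Interlaces (∑ k ∈ Finset.Icc i j, f k) (f j) :=
  consecutive_sums_of_mutually_interlacing_general m f hmut
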